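/- Let F : ℝ → ℝ be of class C² with F(t) > F(0) = 0 for all t ≠ 0, liminf_{|t|→∞} F(t)/t² > 0, and F''(0) = 0. Let φ be as in the context (so φ is continuous and strictly increasing with φ(0)=0). Then there exists q₀ > 0 such that for every q ∈ (0, q₀], every T > 0, and every C² function u : [0,T] → ℝ with u'(0) = u'(T) = 0 satisfying J_q(u) ≤ 0, one has ∫₀ᵀ |u'(x)|² dx ≤ q·T·φ⁻¹(q²/2) and Osc(u)² ≤ q·T²·φ⁻¹(q²/2), where φ⁻¹ denotes the inverse of the restriction of φ to [0,∞). -/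

import Mathlib

open Filter Real intervalIntegral

/-- The convex envelope of `G`: the pointwise supremum of all convex functions lying below
`G`. -/
noncomputable def convexEnvelope (G : ℝ → ℝ) : ℝ → ℝ :=
  fun x => sSup {v : ℝ | ∃ g : ℝ → ℝ,
    ConvexOn ℝ Set.univ g ∧ (∀ y, g y ≤ G y) ∧ g x = v}

/-- `F̃(t) := min {F(t), F(−t)}`. -/
noncomputable def Ftilde (F : ℝ → ℝ) : ℝ → ℝ := fun t => min (F t) (F (-t))

/-- `H := (F̃(√|·|))*`, the convex envelope of `t ↦ F̃(√|t|)`. -/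
noncomputable def Hfun (F : ℝ → ℝ) : ℝ → ℝ :=
  convexEnvelope (fun t => Ftilde F (Real.sqrt |t|))

/-- `φ(t) := H(t)/t` for `t ≠ 0` and `φ(0) := 0`. -/
noncomputable def phiFun (F : ℝ → ℝ) : ℝ → ℝ :=
  fun t => if t = 0 then 0 else Hfun F t / t

/-- The oscillation of `u` on `[0,T]`: `sup u − inf u`. -/
noncomputable def oscOn (u : ℝ → ℝ) (T : ℝ) : ℝ :=
  sSup (u '' Set.Icc 0 T) - sInf (u '' Set.Icc 0 T)

/-!
Write `A = ∫ u'²`, `B = ∫ u''²` and `m = (∫ u²) / T`. Integration by parts (using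
`u'(0) = u'(T) = 0`) and Cauchy–Schwarz give `A² ≤ T m B`; since `H(t²) ≤ F(t)` and `H` is convex,
Jensen's inequality gives `T H(m) ≤ ∫ F(u)`. Inserting both into `J_q(u) ≤ 0` yields
`A ≤ q T m` and `H(m) ≤ q² m / 8`, so `φ(m) ≤ q² / 2`. Let `s` be the supremum of the sublevel set
`{t ≥ 0 | φ t ≤ q² / 2}`: it is finite by the quadratic growth of `F` at infinity (this is where
`q₀` comes from), positive because `F(t) = o(t²)` at `0`, and `φ(s) = q² / 2` by continuity of `φ`
away from `0`. Hence `A ≤ q T s`, and `Osc(u)² ≤ T A` by Cauchy–Schwarz again.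
-/

open MeasureTheory Set Asymptotics Topology

section ConvexEnvelope

variable {G g : ℝ → ℝ}

theorem bddAbove_convexMinorant_values (x : ℝ) :
    BddAbove {v : ℝ | ∃ g : ℝ → ℝ, ConvexOn ℝ univ g ∧ (∀ y, g y ≤ G y) ∧ g x = v} :=
  ⟨G x, by rintro v ⟨g, -, hgG, rfl⟩; exact hgG x⟩

theorem le_convexEnvelope (hg : ConvexOn ℝ univ g) (hgG : g ≤ G) (x : ℝ) :
    g x ≤ convexEnvelope G x :=
  le_csSup (bddAbove_convexMinorant_values x) ⟨g, hg, hgG, rfl⟩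

theorem convexEnvelope_le (hg : ConvexOn ℝ univ g) (hgG : g ≤ G) : convexEnvelope G ≤ G :=
  fun x => csSup_le ⟨g x, g, hg, hgG, rfl⟩ (by rintro v ⟨g', -, hg'G, rfl⟩; exact hg'G x)

theorem convexOn_convexEnvelope (hg : ConvexOn ℝ univ g) (hgG : g ≤ G) :
    ConvexOn ℝ univ (convexEnvelope G) := by
  refine ⟨convex_univ, fun x _ y _ a b ha hb hab => csSup_le ⟨_, g, hg, hgG, rfl⟩ ?_⟩
  rintro v ⟨g', hg', hg'G, rfl⟩
  calc g' (a • x + b • y) ≤ a • g' x + b • g' y := hg'.2 (mem_univ x) (mem_univ y) ha hb hab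
    _ ≤ a • convexEnvelope G x + b • convexEnvelope G y := by
      gcongr <;> exact le_convexEnvelope hg' hg'G _

theorem continuous_convexEnvelope (hg : ConvexOn ℝ univ g) (hgG : g ≤ G) :
    Continuous (convexEnvelope G) :=
  continuousOn_univ.1 ((convexOn_convexEnvelope hg hgG).continuousOn isOpen_univ)

end ConvexEnvelope

section Hfun

variable {F : ℝ → ℝ}

theorem Ftilde_nonneg (hF : ∀ t, 0 ≤ F t) (t : ℝ) : 0 ≤ Ftilde F t :=
  le_min (hF t) (hF (-t))

theorem zero_le_Ftilde_sqrt_abs (hF : ∀ t, 0 ≤ F t) : 0 ≤ fun t => Ftilde F √|t| :=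
  fun t => Ftilde_nonneg hF √|t|

theorem Hfun_nonneg (hF : ∀ t, 0 ≤ F t) (t : ℝ) : 0 ≤ Hfun F t :=
  le_convexEnvelope (convexOn_const 0 convex_univ) (zero_le_Ftilde_sqrt_abs hF) t

theorem convexOn_Hfun (hF : ∀ t, 0 ≤ F t) : ConvexOn ℝ univ (Hfun F) :=
  convexOn_convexEnvelope (convexOn_const 0 convex_univ) (zero_le_Ftilde_sqrt_abs hF)

theorem continuous_Hfun (hF : ∀ t, 0 ≤ F t) : Continuous (Hfun F) :=
  continuous_convexEnvelope (convexOn_const 0 convex_univ) (zero_le_Ftilde_sqrt_abs hF)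

theorem Hfun_sq_le (hF : ∀ t, 0 ≤ F t) (t : ℝ) : Hfun F (t ^ 2) ≤ F t := by
  refine (convexEnvelope_le (convexOn_const 0 convex_univ) (zero_le_Ftilde_sqrt_abs hF) _).trans ?_
  simp only [abs_of_nonneg (sq_nonneg t), sqrt_sq_eq_abs, Ftilde]
  rcases abs_choice t with h | h <;> rw [h]
  · exact min_le_left _ _
  · simp

theorem exists_quadratic_lower_bound
    (h : 0 < liminf (fun t : ℝ => F t / t ^ 2) (atBot ⊔ atTop)) :
    ∃ c > 0, ∃ R, ∀ τ, R ≤ |τ| → c * τ ^ 2 ≤ F τ := by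
  have hbdd : IsBoundedUnder (· ≥ ·) (atBot ⊔ atTop) fun t : ℝ => F t / t ^ 2 := by
    by_contra hb
    -- otherwise the `liminf` would be the junk value `0`
    simp [Real.liminf_of_not_isBoundedUnder hb] at h
  obtain ⟨c, hc₀, hc⟩ := exists_between h
  have hev := eventually_lt_of_lt_liminf hc hbdd
  rw [← comap_abs_atTop, (atTop_basis.comap _).eventually_iff] at hev
  obtain ⟨R, -, hR⟩ := hev
  refine ⟨c, hc₀, max R 1, fun τ hτ => ?_⟩
  have hτ₀ : 0 < τ ^ 2 := by
    rw [← sq_abs]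
    exact pow_pos (one_pos.trans_le (le_of_max_le_right hτ)) 2
  exact ((lt_div_iff₀ hτ₀).1 (hR (mem_preimage.2 (le_of_max_le_left hτ)))).le

theorem le_Hfun_of_quadratic_growth (hF : ∀ t, 0 ≤ F t) {c R : ℝ} (hc : 0 ≤ c)
    (hgrowth : ∀ τ, R ≤ |τ| → c * τ ^ 2 ≤ F τ) {t : ℝ} (ht : 0 ≤ t) :
    c * t - c * R ^ 2 ≤ Hfun F t := by
  have hconv : ConvexOn ℝ univ fun y : ℝ => c * |y| - c * R ^ 2 :=
    ((convexOn_univ_norm (E := ℝ)).smul hc).sub (concaveOn_const _ convex_univ)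
  have hle : (fun y : ℝ => c * |y| - c * R ^ 2) ≤ fun y => Ftilde F √|y| := by
    intro y
    dsimp only
    rcases le_or_gt |y| (R ^ 2) with hy | hy
    · nlinarith [Ftilde_nonneg hF √|y|]
    · have hR : R ≤ |(√|y|)| := by
        rw [abs_of_nonneg (sqrt_nonneg _)]
        exact (le_abs_self R).trans (abs_le_sqrt hy.le)
      have hsq : √|y| ^ 2 = |y| := sq_sqrt (abs_nonneg y)
      have h₁ := hgrowth _ hR
      have h₂ := hgrowth (-√|y|) (by rwa [abs_neg])
      simp only [neg_sq, hsq] at h₁ h₂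
      have hGy : c * |y| ≤ Ftilde F √|y| := le_min h₁ h₂
      linarith [sq_nonneg R, mul_nonneg hc (sq_nonneg R)]
  have := le_convexEnvelope hconv hle t
  rwa [abs_of_nonneg ht] at this

end Hfun

theorem isLittleO_sq_of_iteratedDeriv_eq_zero {F : ℝ → ℝ} (hF : ContDiff ℝ 2 F) (h₀ : F 0 = 0)
    (h₁ : deriv F 0 = 0) (h₂ : iteratedDeriv 2 F 0 = 0) : F =o[𝓝 0] fun x => x ^ 2 := by
  have h := taylor_isLittleO_univ (x₀ := 0) hF
  simp only [taylor_within_apply, Finset.sum_range_succ, Finset.sum_range_zero,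
    iteratedDerivWithin_univ, iteratedDeriv_zero, iteratedDeriv_one, h₀, h₁, h₂] at h
  simpa using h

theorem map_sSup_sublevel_eq {φ : ℝ → ℝ} {y : ℝ} (hne : {t | 0 ≤ t ∧ φ t ≤ y}.Nonempty)
    (hbdd : BddAbove {t | 0 ≤ t ∧ φ t ≤ y}) (hφ : ContinuousAt φ (sSup {t | 0 ≤ t ∧ φ t ≤ y})) :
    φ (sSup {t | 0 ≤ t ∧ φ t ≤ y}) = y := by
  set S := {t | 0 ≤ t ∧ φ t ≤ y}
  refine le_antisymm ?_ (not_lt.1 fun hlt => ?_)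
  · exact ContinuousWithinAt.closure_le (csSup_mem_closure hne hbdd) hφ.continuousWithinAt
      continuousWithinAt_const fun t ht => ht.2
  · obtain ⟨t₀, ht₀⟩ := hne
    have hs : 0 ≤ sSup S := ht₀.1.trans (le_csSup hbdd ht₀)
    obtain ⟨t, hφt, hst⟩ : ∃ t, φ t < y ∧ sSup S < t :=
      ((hφ.eventually (gt_mem_nhds hlt)).filter_mono nhdsWithin_le_nhds |>.and
        self_mem_nhdsWithin).exists (f := 𝓝[>] sSup S)
    exact hst.not_ge (le_csSup hbdd ⟨hs.trans hst.le, hφt.le⟩)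

section Phi

variable {F : ℝ → ℝ}

theorem phiFun_of_ne_zero {t : ℝ} (ht : t ≠ 0) : phiFun F t = Hfun F t / t := if_neg ht

theorem continuousAt_phiFun (hF : ∀ t, 0 ≤ F t) {t : ℝ} (ht : t ≠ 0) :
    ContinuousAt (phiFun F) t :=
  ((continuous_Hfun hF).continuousAt.div continuousAt_id ht).congr
    (eventually_ne_nhds ht |>.mono fun _ hs => (phiFun_of_ne_zero hs).symm)

theorem bddAbove_phiFun_sublevel (hF : ∀ t, 0 ≤ F t) {c R y : ℝ} (hc : 0 ≤ c)
    (hgrowth : ∀ τ, R ≤ |τ| → c * τ ^ 2 ≤ F τ) (hy : y < c) :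
    BddAbove {t | 0 ≤ t ∧ phiFun F t ≤ y} := by
  refine ⟨c * R ^ 2 / (c - y), fun t ⟨ht, hφt⟩ => ?_⟩
  have hcy : 0 < c - y := sub_pos.2 hy
  rw [le_div_iff₀ hcy]
  rcases ht.eq_or_lt with rfl | ht
  · simpa using mul_nonneg hc (sq_nonneg R)
  · have hH := le_Hfun_of_quadratic_growth hF hc hgrowth ht.le
    rw [phiFun_of_ne_zero ht.ne', div_le_iff₀ ht] at hφt
    linarith

theorem exists_pos_phiFun_le (hF : ∀ t, 0 ≤ F t) (hFsmall : F =o[𝓝 0] fun x => x ^ 2) {y : ℝ}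
    (hy : 0 < y) : ∃ t, 0 < t ∧ phiFun F t ≤ y := by
  obtain ⟨τ, hτ, hτ₀⟩ := ((hFsmall.bound hy).filter_mono nhdsWithin_le_nhds |>.and
    self_mem_nhdsWithin).exists (f := 𝓝[>] 0)
  have hτ₂ : 0 < τ ^ 2 := by positivity
  refine ⟨τ ^ 2, hτ₂, ?_⟩
  rw [phiFun_of_ne_zero hτ₂.ne', div_le_iff₀ hτ₂]
  calc Hfun F (τ ^ 2) ≤ F τ := Hfun_sq_le hF τ
    _ ≤ y * τ ^ 2 := by simpa [abs_of_nonneg (hF τ)] using hτ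

end Phi

section Integrals

open scoped Interval

variable {a b : ℝ} {f g u : ℝ → ℝ}

theorem sq_integral_mul_le (hab : a ≤ b) (hf : Continuous f) (hg : Continuous g) :
    (∫ x in a..b, f x * g x) ^ 2 ≤ (∫ x in a..b, f x ^ 2) * ∫ x in a..b, g x ^ 2 := by
  have hquad : ∀ L : ℝ, 0 ≤ (∫ x in a..b, f x ^ 2) * (L * L)
      + 2 * (∫ x in a..b, f x * g x) * L + ∫ x in a..b, g x ^ 2 := by
    intro L
    have hexpand : (∫ x in a..b, (L * f x + g x) ^ 2) = (∫ x in a..b, f x ^ 2) * (L * L)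
        + 2 * (∫ x in a..b, f x * g x) * L + ∫ x in a..b, g x ^ 2 := by
      have hpt : ∀ x, (L * f x + g x) ^ 2 = L * L * f x ^ 2 + 2 * L * (f x * g x) + g x ^ 2 :=
        fun x => by ring
      simp_rw [hpt]
      rw [intervalIntegral.integral_add, intervalIntegral.integral_add,
        intervalIntegral.integral_const_mul, intervalIntegral.integral_const_mul]
      · ring
      all_goals exact Continuous.intervalIntegrable (by fun_prop) a b
    exact hexpand ▸ integral_nonneg hab fun x _ => sq_nonneg _
  have := discrim_le_zero hquad
  rw [discrim] at this
  nlinarith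

theorem integral_deriv_sq_eq_neg_integral_mul_iteratedDeriv_two (hu : ContDiff ℝ 2 u)
    (ha : deriv u a = 0) (hb : deriv u b = 0) :
    ∫ x in a..b, deriv u x ^ 2 = -∫ x in a..b, u x * iteratedDeriv 2 u x := by
  have hu₁ : ContDiff ℝ 1 (deriv u) := hu.iterate_deriv' 1 1
  have hparts := integral_mul_deriv_eq_deriv_mul (a := a) (b := b)
    (fun x _ => (hu.differentiable two_ne_zero x).hasDerivAt)
    (fun x _ => (hu₁.differentiable one_ne_zero x).hasDerivAt)
    ((hu.continuous_deriv one_le_two).intervalIntegrable a b)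
    ((hu₁.continuous_deriv le_rfl).intervalIntegrable a b)
  rw [iteratedDeriv_succ, iteratedDeriv_one]
  simp only [ha, hb, mul_zero, sub_zero, ← sq] at hparts
  linarith

theorem sq_sub_le_mul_integral_deriv_sq (hu : ContDiff ℝ 1 u) (hab : a ≤ b) :
    (u b - u a) ^ 2 ≤ (b - a) * ∫ x in a..b, deriv u x ^ 2 := by
  have hu' : Continuous (deriv u) := hu.continuous_deriv le_rfl
  have hftc : ∫ x in a..b, deriv u x = u b - u a :=
    integral_deriv_eq_sub (fun x _ => hu.differentiable one_ne_zero x)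
      (hu'.intervalIntegrable a b)
  simpa [hftc] using sq_integral_mul_le (f := fun _ => 1) hab continuous_const hu'

theorem oscOn_sq_le (hu : ContDiff ℝ 1 u) {T : ℝ} (hT : 0 ≤ T) :
    oscOn u T ^ 2 ≤ T * ∫ x in 0..T, deriv u x ^ 2 := by
  have hne : (Icc 0 T).Nonempty := nonempty_Icc.2 hT
  obtain ⟨p, hp, hpmin⟩ := isCompact_Icc.exists_isMinOn hne hu.continuous.continuousOn
  obtain ⟨r, hr, hrmax⟩ := isCompact_Icc.exists_isMaxOn hne hu.continuous.continuousOn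
  have hosc : oscOn u T = u r - u p := by
    rw [oscOn, IsGreatest.csSup_eq ⟨mem_image_of_mem u hr, forall_mem_image.2 fun _ hx => hrmax hx⟩,
      IsLeast.csInf_eq ⟨mem_image_of_mem u hp, forall_mem_image.2 fun _ hx => hpmin hx⟩]
  have hseg : ∀ x ∈ Icc 0 T, ∀ y ∈ Icc 0 T, x ≤ y →
      (u y - u x) ^ 2 ≤ T * ∫ x in 0..T, deriv u x ^ 2 := by
    intro x hx y hy hxy
    calc (u y - u x) ^ 2 ≤ (y - x) * ∫ t in x..y, deriv u t ^ 2 :=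
          sq_sub_le_mul_integral_deriv_sq hu hxy
      _ ≤ T * ∫ t in 0..T, deriv u t ^ 2 := by
          gcongr
          · exact integral_nonneg hxy fun _ _ => sq_nonneg _
          · linarith [hx.1, hy.2]
          · exact integral_mono_interval hx.1 hxy hy.2 (ae_of_all _ fun _ => sq_nonneg _)
              ((hu.continuous_deriv le_rfl).pow 2 |>.intervalIntegrable 0 T)
  rw [hosc]
  rcases le_total p r with hpr | hrp
  · exact hseg p hp r hr hpr
  · rw [← neg_sub, neg_sq]
    exact hseg r hr p hp hrp

theorem ConvexOn.mul_map_integral_div_le (hab : a < b) (hg : ConvexOn ℝ univ g)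
    (hgc : Continuous g) (hf : Continuous f) :
    (b - a) * g ((∫ x in a..b, f x) / (b - a)) ≤ ∫ x in a..b, g (f x) := by
  have hvol : volume (Ι a b) = ENNReal.ofReal (b - a) := by
    rw [uIoc_of_le hab.le, Real.volume_Ioc]
  have h := hg.map_set_average_le (μ := volume) (t := Ι a b) hgc.continuousOn isClosed_univ
    (by rw [hvol]; simpa using hab) (by simp [hvol]) (ae_of_all _ fun _ => mem_univ _)
    ((intervalIntegrable_iff.1 (hf.intervalIntegrable a b)))
    ((intervalIntegrable_iff.1 ((hgc.comp hf).intervalIntegrable a b)))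
  rw [interval_average_eq_div, interval_average_eq_div, le_div_iff₀' (sub_pos.2 hab)] at h
  exact h

end Integrals

theorem dirichlet_bounds_of_energy_nonpos {A B m Φ h q T : ℝ} (hq : 0 ≤ q) (hT : 0 < T)
    (hm : 0 ≤ m) (hh : 0 ≤ h) (hCS : A ^ 2 ≤ T * m * B) (hE : B / 2 - q * A / 2 + Φ ≤ 0)
    (hJ : T * h ≤ Φ) : A ≤ q * T * m ∧ 8 * h * m ≤ q ^ 2 * m ^ 2 := by
  have hTm : 0 ≤ T * m := by positivity
  have hAB : A ^ 2 + 2 * T * m * (T * h) ≤ q * (T * m) * A := by nlinarith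
  constructor
  · nlinarith [mul_nonneg hTm (mul_nonneg hT.le hh), mul_nonneg hq hTm]
  · have : T ^ 2 * (8 * h * m) ≤ T ^ 2 * (q ^ 2 * m ^ 2) := by
      nlinarith [sq_nonneg (2 * A - q * T * m)]
    exact le_of_mul_le_mul_left this (by positivity)

theorem integral_deriv_sq_le_of_energy_nonpos {F : ℝ → ℝ} (hFc : Continuous F)
    (hF : ∀ t, 0 ≤ F t) {q T s : ℝ} (hq : 0 ≤ q) (hT : 0 < T)
    (hs : s ∈ upperBounds {t | 0 ≤ t ∧ phiFun F t ≤ q ^ 2 / 2}) {u : ℝ → ℝ}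
    (hu : ContDiff ℝ 2 u) (hu0 : deriv u 0 = 0) (huT : deriv u T = 0)
    (hJ : ∫ x in (0:ℝ)..T, (iteratedDeriv 2 u x ^ 2 / 2 - q * deriv u x ^ 2 / 2 + F (u x)) ≤ 0) :
    ∫ x in (0:ℝ)..T, deriv u x ^ 2 ≤ q * T * s := by
  have hu₀ : Continuous u := hu.continuous
  have hu₁ : Continuous (deriv u) := hu.continuous_deriv one_le_two
  have hu₂ : Continuous (iteratedDeriv 2 u) := hu.continuous_iteratedDeriv 2 le_rfl
  have hH : Continuous (Hfun F) := continuous_Hfun hF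
  set m := (∫ x in (0:ℝ)..T, u x ^ 2) / T
  have hm : 0 ≤ m := div_nonneg (integral_nonneg hT.le fun _ _ => sq_nonneg _) hT.le
  have hE : (∫ x in (0:ℝ)..T, iteratedDeriv 2 u x ^ 2) / 2
      - q * (∫ x in (0:ℝ)..T, deriv u x ^ 2) / 2 + ∫ x in (0:ℝ)..T, F (u x) ≤ 0 := by
    rw [intervalIntegral.integral_add, intervalIntegral.integral_sub, intervalIntegral.integral_div,
      intervalIntegral.integral_div, intervalIntegral.integral_const_mul] at hJ
    · exact hJ
    all_goals exact Continuous.intervalIntegrable (by fun_prop) 0 T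
  have hCS : (∫ x in (0:ℝ)..T, deriv u x ^ 2) ^ 2
      ≤ T * m * ∫ x in (0:ℝ)..T, iteratedDeriv 2 u x ^ 2 := by
    rw [mul_div_cancel₀ _ hT.ne',
      integral_deriv_sq_eq_neg_integral_mul_iteratedDeriv_two hu hu0 huT, neg_sq]
    exact sq_integral_mul_le hT.le hu₀ hu₂
  have hJensen : T * Hfun F m ≤ ∫ x in (0:ℝ)..T, F (u x) := by
    calc T * Hfun F m ≤ ∫ x in (0:ℝ)..T, Hfun F (u x ^ 2) := by
          simpa using (convexOn_Hfun hF).mul_map_integral_div_le hT hH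
            (hu₀.pow 2)
      _ ≤ ∫ x in (0:ℝ)..T, F (u x) :=
          intervalIntegral.integral_mono_on hT.le
            (Continuous.intervalIntegrable (by fun_prop) 0 T)
            (Continuous.intervalIntegrable (by fun_prop) 0 T) fun x _ => Hfun_sq_le hF (u x)
  obtain ⟨hA, hHm⟩ := dirichlet_bounds_of_energy_nonpos hq hT hm (Hfun_nonneg hF m) hCS hE hJensen
  have hms : m ≤ s := by
    refine hs ⟨hm, ?_⟩
    rcases hm.eq_or_lt with hm₀ | hm₀
    · rw [← hm₀, phiFun, if_pos rfl]
      positivity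
    · rw [phiFun_of_ne_zero hm₀.ne', div_le_iff₀ hm₀]
      nlinarith
  calc ∫ x in (0:ℝ)..T, deriv u x ^ 2 ≤ q * T * m := hA
    _ ≤ q * T * s := by gcongr

/-- Let `F` be `C²` with `F(t) > F(0) = 0` for `t ≠ 0`,
`liminf_{|t|→∞} F(t)/t² > 0` and `F''(0) = 0`, and let `φ` be as above. Then there is
`q₀ > 0` such that for every `q ∈ (0, q₀]`, with `s ≥ 0` the (unique, since `φ` is
strictly increasing) value `φ⁻¹(q²/2)` of the inverse of `φ` restricted to `[0,∞)`,
every `T > 0` and every `C²` function `u` on `[0,T]` with `u'(0) = u'(T) = 0` and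
`J_q(u) ≤ 0` satisfy `∫₀ᵀ |u'|² ≤ q·T·φ⁻¹(q²/2)` and `Osc(u)² ≤ q·T²·φ⁻¹(q²/2)`. -/
theorem stmt16 (F : ℝ → ℝ) (hF : ContDiff ℝ 2 F) (hF0 : F 0 = 0)
    (hargmin : ∀ t : ℝ, t ≠ 0 → F 0 < F t)
    (hliminf : 0 < Filter.liminf (fun t : ℝ => F t / t ^ 2) (Filter.atBot ⊔ Filter.atTop))
    (hF'' : iteratedDeriv 2 F 0 = 0) :
    ∃ q₀ > (0:ℝ), ∀ q : ℝ, 0 < q → q ≤ q₀ →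
      ∃ s : ℝ, 0 ≤ s ∧ phiFun F s = q ^ 2 / 2 ∧
        ∀ T : ℝ, 0 < T →
          ∀ u : ℝ → ℝ, ContDiff ℝ 2 u → deriv u 0 = 0 → deriv u T = 0 →
            (∫ x in (0:ℝ)..T,
              ((iteratedDeriv 2 u x) ^ 2 / 2 - q * (deriv u x) ^ 2 / 2 + F (u x))) ≤ 0 →
            (∫ x in (0:ℝ)..T, (deriv u x) ^ 2) ≤ q * T * s ∧
            (oscOn u T) ^ 2 ≤ q * T ^ 2 * s := by
  have hFmin : ∀ t, F 0 ≤ F t := fun t =>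
    (eq_or_ne t 0).elim (fun ht => ht ▸ le_rfl) fun ht => (hargmin t ht).le
  have hFnn : ∀ t, 0 ≤ F t := fun t => hF0 ▸ hFmin t
  have hFsmall : F =o[𝓝 0] fun x => x ^ 2 := isLittleO_sq_of_iteratedDeriv_eq_zero hF hF0
    (IsLocalMin.deriv_eq_zero (Eventually.of_forall hFmin)) hF''
  obtain ⟨c, hc, R, hR⟩ := exists_quadratic_lower_bound hliminf
  refine ⟨√(c / 2), by positivity, fun q hq hqc => ?_⟩
  have hqc : q ^ 2 / 2 < c := by
    have := (le_sqrt hq.le (half_pos hc).le).1 hqc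
    linarith
  set S := {t | 0 ≤ t ∧ phiFun F t ≤ q ^ 2 / 2}
  have hbdd : BddAbove S := bddAbove_phiFun_sublevel hFnn hc.le hR hqc
  obtain ⟨t₀, ht₀, hφt₀⟩ := exists_pos_phiFun_le hFnn hFsmall (by positivity : 0 < q ^ 2 / 2)
  have hs : 0 < sSup S := ht₀.trans_le (le_csSup hbdd ⟨ht₀.le, hφt₀⟩)
  refine ⟨sSup S, hs.le, map_sSup_sublevel_eq ⟨t₀, ht₀.le, hφt₀⟩ hbdd
    (continuousAt_phiFun hFnn hs.ne'), fun T hT u hu hu0 huT hJ => ?_⟩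
  have hA := integral_deriv_sq_le_of_energy_nonpos hF.continuous hFnn hq.le hT
    (fun _ ht => le_csSup hbdd ht) hu hu0 huT hJ
  refine ⟨hA, ?_⟩
  calc oscOn u T ^ 2 ≤ T * ∫ x in (0:ℝ)..T, deriv u x ^ 2 := oscOn_sq_le (hu.of_le one_le_two) hT.le
    _ ≤ T * (q * T * sSup S) := by gcongr
    _ = q * T ^ 2 * sSup S := by ring
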